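/- arXiv:1302.6929 — 2 statements merged into one kernel-verified Lean document; each statement's English description precedes it below -/
import Mathlib

section
/- For any skew product F in the class 𝒮, the sets Up(F) and Down(F) are disjoint: Up(F) ∩ Down(F) = ∅. -/
open Set MeasureTheory Filter Topology

namespace SkewPaper

/-- A bi-infinite sequence over the alphabet `{1,…,N}` (modelled as `Fin N`) is allowed
by the 0-1 transition matrix `A`. -/
def Allowed {N : ℕ} (A : Fin N → Fin N → Bool) (ω : ℤ → Fin N) : Prop :=
  ∀ n : ℤ, A (ω n) (ω (n + 1)) = true

/-- The subshift of finite type `Σ ⊆ {1,…,N}^ℤ` determined by the transition matrix `A`,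
with the product (= metric `d(ω̄,ω) = 2^{-min{|n| : ω̄ₙ ≠ ωₙ}}`) topology. -/
abbrev Sig (N : ℕ) (A : Fin N → Fin N → Bool) : Type :=
  {ω : ℤ → Fin N // Allowed A ω}

variable {N : ℕ} {A : Fin N → Fin N → Bool}

/-- The left shift `σ : Σ → Σ`. -/
def shift (ω : Sig N A) : Sig N A :=
  ⟨fun n => ω.1 (n + 1), fun n => ω.2 (n + 1)⟩

/-- The inverse `σ⁻¹` of the left shift. -/
def shiftInv (ω : Sig N A) : Sig N A :=
  ⟨fun n => ω.1 (n - 1), fun n => by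
    show A (ω.1 (n - 1)) (ω.1 (n + 1 - 1)) = true
    have h := ω.2 (n - 1)
    have e1 : n - 1 + 1 = n := by ring
    have e2 : n + 1 - 1 = n := by ring
    rw [e1] at h; rw [e2]; exact h⟩

/-- Topological transitivity of the shift `σ` on `Σ`. -/
def ShiftTransitive (N : ℕ) (A : Fin N → Fin N → Bool) : Prop :=
  ∀ U V : Set (Sig N A), IsOpen U → IsOpen V → U.Nonempty → V.Nonempty →
    ∃ n : ℕ, ((shift (A := A))^[n] '' U ∩ V).Nonempty

/-- The class `𝒮` of skew products `F(ω,x) = (σω, f_ω(x))` over the subshift `Σ`,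
with fiber `I = [0,1]`.  The fiber maps `f_ω` (encoded as maps `ℝ → ℝ` whose behaviour
is prescribed on `I`) are orientation-preserving `C¹` diffeomorphisms sending `I`
strictly inside itself, with `C¹` inverses `fInv ω`, and `ω ↦ f_ω` is continuous in the
`C¹` sense. -/
structure SkewSys (N : ℕ) (A : Fin N → Fin N → Bool) where
  f : Sig N A → ℝ → ℝ
  fInv : Sig N A → ℝ → ℝ
  contDiff : ∀ ω, ContDiffOn ℝ 1 (f ω) (Icc 0 1)
  deriv_pos : ∀ ω, ∀ x ∈ Icc (0:ℝ) 1, 0 < derivWithin (f ω) (Icc 0 1) x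
  maps_in : ∀ ω, MapsTo (f ω) (Icc 0 1) (Ioo 0 1)
  leftInv : ∀ ω, ∀ x ∈ Icc (0:ℝ) 1, fInv ω (f ω x) = x
  inv_contDiff : ∀ ω, ContDiffOn ℝ 1 (fInv ω) (Icc 0 1)
  cont : ContinuousOn (fun p : Sig N A × ℝ => f p.1 p.2) (univ ×ˢ Icc 0 1)
  cont_deriv : ContinuousOn
    (fun p : Sig N A × ℝ => derivWithin (f p.1) (Icc 0 1) p.2) (univ ×ˢ Icc 0 1)
  inv_cont : ContinuousOn (fun p : Sig N A × ℝ => fInv p.1 p.2) (univ ×ˢ Icc 0 1)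
  inv_cont_deriv : ContinuousOn
    (fun p : Sig N A × ℝ => derivWithin (fInv p.1) (Icc 0 1) p.2) (univ ×ˢ Icc 0 1)

/-- The skew product map `F : Σ × ℝ → Σ × ℝ`, `(ω,x) ↦ (σω, f_ω(x))`. -/
def FMap (F : SkewSys N A) : Sig N A × ℝ → Sig N A × ℝ :=
  fun p => (shift p.1, F.f p.1 p.2)

/-- The phase space `Σ × I`, viewed inside `Σ × ℝ`. -/
def phaseSpace (N : ℕ) (A : Fin N → Fin N → Bool) : Set (Sig N A × ℝ) :=
  univ ×ˢ Icc 0 1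

/-- The graph of `γ` drifts up: `F(Γ) > Γ`, i.e. the graph function
`ω ↦ f_{σ⁻¹ω}(γ(σ⁻¹ω))` of `F(Γ)` is pointwise strictly above `γ`. -/
def DriftsUp (F : SkewSys N A) (γ : Sig N A → ℝ) : Prop :=
  ∀ ω, γ ω < F.f (shiftInv ω) (γ (shiftInv ω))

/-- The graph of `γ` drifts down: `F(Γ) < Γ`. -/
def DriftsDown (F : SkewSys N A) (γ : Sig N A → ℝ) : Prop :=
  ∀ ω, F.f (shiftInv ω) (γ (shiftInv ω)) < γ ω

/-- `Up(F)`: the set of points `p = (ω,x)` drifting up, i.e. such that there is a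
continuous `γ : Σ → I` whose graph drifts up with `γ(ω) < x < f_{σ⁻¹ω}(γ(σ⁻¹ω))`. -/
def Up (F : SkewSys N A) : Set (Sig N A × ℝ) :=
  {p | ∃ γ : Sig N A → ℝ, Continuous γ ∧ (∀ ω, γ ω ∈ Icc (0:ℝ) 1) ∧ DriftsUp F γ ∧
    γ p.1 < p.2 ∧ p.2 < F.f (shiftInv p.1) (γ (shiftInv p.1))}

/-- `Down(F)`: the set of points drifting down. -/
def Down (F : SkewSys N A) : Set (Sig N A × ℝ) :=
  {p | ∃ γ : Sig N A → ℝ, Continuous γ ∧ (∀ ω, γ ω ∈ Icc (0:ℝ) 1) ∧ DriftsDown F γ ∧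
    F.f (shiftInv p.1) (γ (shiftInv p.1)) < p.2 ∧ p.2 < γ p.1}

/-- The anchored set `Indiff(F) = (Σ × I) \ (Up(F) ∪ Down(F))`. -/
def Indiff (F : SkewSys N A) : Set (Sig N A × ℝ) :=
  phaseSpace N A \ (Up F ∪ Down F)

/-- The nonwandering set `Ω(F)`: points `p ∈ Σ × I` such that every neighborhood `U`
of `p` in `Σ × I` satisfies `F^n(U) ∩ U ≠ ∅` for some `n ≥ 1`. -/
def NonWandering (F : SkewSys N A) : Set (Sig N A × ℝ) :=
  {p | p ∈ phaseSpace N A ∧ ∀ U : Set (Sig N A × ℝ), IsOpen U → p ∈ U →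
    ∃ n : ℕ, 1 ≤ n ∧ ∃ q ∈ U ∩ phaseSpace N A, (FMap F)^[n] q ∈ U ∩ phaseSpace N A}

/-- The partial order `F ≺ F̃` on `𝒮`: `f_ω(x) < f̃_ω(x)` for all `ω ∈ Σ`, `x ∈ I`. -/
def Prec (F G : SkewSys N A) : Prop :=
  ∀ ω, ∀ x ∈ Icc (0:ℝ) 1, F.f ω x < G.f ω x

/-- A skew product is multistep if its fiber maps depend only on finitely many
coordinates `ω_{-m}, …, ω_m` of `ω`. -/
def Multistep (F : SkewSys N A) : Prop :=
  ∃ m : ℕ, ∀ ω ω' : Sig N A, (∀ n : ℤ, n.natAbs ≤ m → ω.1 n = ω'.1 n) → F.f ω = F.f ω'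

/-- The `C¹` distance `dist(F,F̃) = max_ω dist_{C¹}(f_ω^{±1}, f̃_ω^{±1})` on `𝒮`. -/
noncomputable def SDist (F G : SkewSys N A) : ℝ :=
  ⨆ p : Sig N A × Icc (0:ℝ) 1,
    max
      (max |F.f p.1 p.2 - G.f p.1 p.2|
        |derivWithin (F.f p.1) (Icc 0 1) p.2 - derivWithin (G.f p.1) (Icc 0 1) p.2|)
      (max |F.fInv p.1 p.2 - G.fInv p.1 p.2|
        |derivWithin (F.fInv p.1) (Icc 0 1) p.2 - derivWithin (G.fInv p.1) (Icc 0 1) p.2|)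

/-- The standard measure `m = μ × Leb` on `Σ × I` (with `Leb` Lebesgue measure
restricted to `I = [0,1]`). -/
noncomputable def stdMeasure (μ : Measure (Sig N A)) : Measure (Sig N A × ℝ) :=
  μ.prod (volume.restrict (Icc 0 1))

/-- A family `(F_τ)_{τ ∈ (a,b)}` in `𝒮` is monotone increasing if `F_{τ₁} ≺ F_{τ₂}`
whenever `τ₁ < τ₂`. -/
def MonoFam (F : ℝ → SkewSys N A) (a b : ℝ) : Prop :=
  ∀ τ₁ ∈ Ioo a b, ∀ τ₂ ∈ Ioo a b, τ₁ < τ₂ → Prec (F τ₁) (F τ₂)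

/-- A family `(F_τ)_{τ ∈ (a,b)}` in `𝒮` is continuous in `τ` for the metric `dist`. -/
def ContFam (F : ℝ → SkewSys N A) (a b : ℝ) : Prop :=
  ∀ τ ∈ Ioo a b, ∀ ε : ℝ, 0 < ε → ∃ δ > 0,
    ∀ τ' ∈ Ioo a b, |τ' - τ| < δ → SDist (F τ') (F τ) < ε

/-- The pushforward `Γ ↦ F(Γ)` on graph functions: the graph of `pushGraph F γ`,
namely `ω ↦ f_{σ⁻¹ω}(γ(σ⁻¹ω))`, is the image `F(Γ)` of the graph `Γ` of `γ`. -/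
def pushGraph (F : SkewSys N A) (γ : Sig N A → ℝ) : Sig N A → ℝ :=
  fun ω => F.f (shiftInv ω) (γ (shiftInv ω))

/-! If `p` drifted both up, along `γu`, and down, along `γd`, the two graphs would cross
between the fibres over `σ⁻¹ω` and `ω`. The open set where `γu < γd` is forward
`σ`-invariant, since the up-graph rises, the down-graph sinks and the fibre maps preserve
order; by transitivity some forward image of it meets the open set where `γd < γu`. -/

lemma shiftInv_shift (ω : Sig N A) : shiftInv (shift ω) = ω := by
  apply Subtype.ext; funext n
  show ω.1 (n - 1 + 1) = ω.1 n
  rw [sub_add_cancel]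

lemma SkewSys.strictMonoOn_f (F : SkewSys N A) (ω : Sig N A) :
    StrictMonoOn (F.f ω) (Icc 0 1) := by
  refine strictMonoOn_of_hasDerivWithinAt_pos (convex_Icc 0 1) (F.contDiff ω).continuousOn
    (fun x hx => ?_) (fun x hx => F.deriv_pos ω x (interior_subset hx))
  exact ((((F.contDiff ω).differentiableOn one_ne_zero) x
    (interior_subset hx)).hasDerivWithinAt).mono interior_subset

lemma ShiftTransitive.inter_nonempty_of_mapsTo (htrans : ShiftTransitive N A)
    {U V : Set (Sig N A)} (hU : IsOpen U) (hV : IsOpen V) (hUne : U.Nonempty)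
    (hVne : V.Nonempty) (hinv : MapsTo shift U U) : (U ∩ V).Nonempty := by
  obtain ⟨n, _, ⟨ω, hωU, rfl⟩, hωV⟩ := htrans U V hU hV hUne hVne
  exact ⟨_, hinv.iterate n hωU, hωV⟩

lemma mapsTo_shift_setOf_lt {F : SkewSys N A} {γu γd : Sig N A → ℝ}
    (hu : DriftsUp F γu) (hd : DriftsDown F γd) (hγu : ∀ ω, γu ω ∈ Icc (0:ℝ) 1)
    (hγd : ∀ ω, γd ω ∈ Icc (0:ℝ) 1) :
    MapsTo shift {ω | γu ω < γd ω} {ω | γu ω < γd ω} := by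
  intro ω (hω : γu ω < γd ω)
  have hup := hu (shift ω)
  have hdown := hd (shift ω)
  rw [shiftInv_shift] at hup hdown
  exact hup.trans ((F.strictMonoOn_f ω (hγu ω) (hγd ω) hω).trans hdown)

theorem up_down_disjoint_general {N : ℕ} {A : Fin N → Fin N → Bool}
    (htrans : ShiftTransitive N A) (F : SkewSys N A) :
    Up F ∩ Down F = ∅ := by
  rw [eq_empty_iff_forall_notMem]
  rintro ⟨ω, x⟩ ⟨⟨γu, hγu_cont, hγu, hup, hu_lt, lt_hu⟩, ⟨γd, hγd_cont, hγd, hdown, hd_lt, lt_hd⟩⟩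
  have hcross : γd (shiftInv ω) < γu (shiftInv ω) :=
    ((F.strictMonoOn_f (shiftInv ω)).lt_iff_lt (hγd _) (hγu _)).mp (hd_lt.trans lt_hu)
  obtain ⟨ω', hlt, hgt⟩ := htrans.inter_nonempty_of_mapsTo (isOpen_lt hγu_cont hγd_cont)
    (isOpen_lt hγd_cont hγu_cont) ⟨ω, hu_lt.trans lt_hd⟩ ⟨shiftInv ω, hcross⟩
    (mapsTo_shift_setOf_lt hup hdown hγu hγd)
  exact lt_asymm (show γu ω' < γd ω' from hlt) hgt

/-- For any `F ∈ 𝒮`, the sets `Up(F)` and `Down(F)` are disjoint. -/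
theorem up_down_disjoint {N : ℕ} {A : Fin N → Fin N → Bool} (hN : 2 ≤ N)
    (htrans : ShiftTransitive N A) (F : SkewSys N A) :
    Up F ∩ Down F = ∅ :=
  up_down_disjoint_general htrans F

end SkewPaper
end

section
/- Let (F_τ) be a monotone increasing family in 𝒮, continuous in τ. Then for any fixed point p ∈ Σ × I, the set of parameters {τ : p ∈ Down(F_τ)} is open; similarly, {τ : p ∈ Up(F_τ)} is open. -/
open Set MeasureTheory Filter Topology

namespace SkewPaper

variable {N : ℕ} {A : Fin N → Fin N → Bool}

section Aux

variable {N : ℕ} {A : Fin N → Fin N → Bool}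

instance : CompactSpace (Sig N A) := by
  have hclosed : IsClosed {ω : ℤ → Fin N | Allowed A ω} := by
    have : {ω : ℤ → Fin N | Allowed A ω} =
        ⋂ n : ℤ, {ω : ℤ → Fin N | A (ω n) (ω (n + 1)) = true} := by
      ext ω; simp [Allowed, Set.mem_iInter]
    rw [this]
    refine isClosed_iInter fun n => ?_
    have hc : Continuous fun ω : ℤ → Fin N => (ω n, ω (n + 1)) :=
      (continuous_apply n).prodMk (continuous_apply (n + 1))
    exact (isClosed_discrete {q : Fin N × Fin N | A q.1 q.2 = true}).preimage hc
  exact isCompact_iff_compactSpace.mp hclosed.isCompact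

lemma shiftInv_continuous : Continuous (shiftInv (A := A)) := by
  apply Continuous.subtype_mk
  exact continuous_pi fun n => (continuous_apply (n - 1)).comp continuous_subtype_val

lemma sdist_bdd (F G : SkewSys N A) :
    BddAbove (Set.range fun p : Sig N A × Icc (0:ℝ) 1 =>
      max
        (max |F.f p.1 p.2 - G.f p.1 p.2|
          |derivWithin (F.f p.1) (Icc 0 1) p.2 - derivWithin (G.f p.1) (Icc 0 1) p.2|)
        (max |F.fInv p.1 p.2 - G.fInv p.1 p.2|
          |derivWithin (F.fInv p.1) (Icc 0 1) p.2 - derivWithin (G.fInv p.1) (Icc 0 1) p.2|)) := by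
  have hmap : Continuous fun q : Sig N A × Icc (0:ℝ) 1 => ((q.1, (q.2 : ℝ)) : Sig N A × ℝ) :=
    continuous_fst.prodMk (continuous_subtype_val.comp continuous_snd)
  have hmem : ∀ q : Sig N A × Icc (0:ℝ) 1, ((q.1, (q.2 : ℝ)) : Sig N A × ℝ) ∈
      (univ ×ˢ Icc 0 1 : Set (Sig N A × ℝ)) := fun q => ⟨mem_univ _, q.2.2⟩
  have c1 := F.cont.comp_continuous hmap hmem
  have c2 := G.cont.comp_continuous hmap hmem
  have c3 := F.cont_deriv.comp_continuous hmap hmem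
  have c4 := G.cont_deriv.comp_continuous hmap hmem
  have c5 := F.inv_cont.comp_continuous hmap hmem
  have c6 := G.inv_cont.comp_continuous hmap hmem
  have c7 := F.inv_cont_deriv.comp_continuous hmap hmem
  have c8 := G.inv_cont_deriv.comp_continuous hmap hmem
  have hc : Continuous fun p : Sig N A × Icc (0:ℝ) 1 =>
      max
        (max |F.f p.1 p.2 - G.f p.1 p.2|
          |derivWithin (F.f p.1) (Icc 0 1) p.2 - derivWithin (G.f p.1) (Icc 0 1) p.2|)
        (max |F.fInv p.1 p.2 - G.fInv p.1 p.2|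
          |derivWithin (F.fInv p.1) (Icc 0 1) p.2 - derivWithin (G.fInv p.1) (Icc 0 1) p.2|) := by
    exact (((c1.sub c2).abs.max (c3.sub c4).abs).max ((c5.sub c6).abs.max (c7.sub c8).abs))
  exact (isCompact_range hc).bddAbove

lemma abs_f_sub_le_sdist (F G : SkewSys N A) (ω : Sig N A) {x : ℝ} (hx : x ∈ Icc (0:ℝ) 1) :
    |F.f ω x - G.f ω x| ≤ SDist F G := by
  have h := le_ciSup (sdist_bdd F G) ((ω, ⟨x, hx⟩) : Sig N A × Icc (0:ℝ) 1)
  refine le_trans ?_ h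
  exact le_trans (le_max_left _ _) (le_max_left _ _)

lemma pushGraph_cont (F : SkewSys N A) {γ : Sig N A → ℝ} (hγ : Continuous γ)
    (hγI : ∀ ω, γ ω ∈ Icc (0:ℝ) 1) : Continuous (pushGraph F γ) := by
  have hmap : Continuous fun ω : Sig N A => ((shiftInv ω, γ (shiftInv ω)) : Sig N A × ℝ) :=
    shiftInv_continuous.prodMk (hγ.comp shiftInv_continuous)
  exact F.cont.comp_continuous hmap fun ω => ⟨mem_univ _, hγI _⟩

end Aux

/-- For a continuous monotone increasing family `(F_τ)_{τ∈(a,b)}` and a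
fixed point `p`, the parameter sets `{τ : p ∈ Down(F_τ)}` and `{τ : p ∈ Up(F_τ)}`
are open. -/
theorem parameter_sets_open {N : ℕ} {A : Fin N → Fin N → Bool} (hN : 2 ≤ N)
    (htrans : ShiftTransitive N A) (F : ℝ → SkewSys N A) (a b : ℝ)
    (hmono : MonoFam F a b) (hcont : ContFam F a b) (p : Sig N A × ℝ) :
    IsOpen {τ : ℝ | τ ∈ Ioo a b ∧ p ∈ Down (F τ)}
      ∧ IsOpen {τ : ℝ | τ ∈ Ioo a b ∧ p ∈ Up (F τ)} := by
  constructor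
  · rw [Metric.isOpen_iff]
    rintro τ₀ ⟨hτ₀, γ, hγc, hγI, hdrift, h1, h2⟩
    haveI : Nonempty (Sig N A) := ⟨p.1⟩
    set g : Sig N A → ℝ := fun ω => γ ω - pushGraph (F τ₀) γ ω with hg
    have hgc : Continuous g := hγc.sub (pushGraph_cont (F τ₀) hγc hγI)
    obtain ⟨ω₀, -, hω₀⟩ := isCompact_univ.exists_isMinOn univ_nonempty hgc.continuousOn
    have hgpos : 0 < g ω₀ := sub_pos.mpr (hdrift ω₀)
    set ε : ℝ := min (g ω₀) (p.2 - (F τ₀).f (shiftInv p.1) (γ (shiftInv p.1))) with hε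
    have hεpos : 0 < ε := lt_min hgpos (sub_pos.mpr h1)
    obtain ⟨δ, hδpos, hδ⟩ := hcont τ₀ hτ₀ ε hεpos
    refine ⟨min δ (min (τ₀ - a) (b - τ₀)),
      lt_min hδpos (lt_min (sub_pos.mpr hτ₀.1) (sub_pos.mpr hτ₀.2)), fun τ' hτ' => ?_⟩
    rw [Metric.mem_ball, Real.dist_eq] at hτ'
    have hsub : |τ' - τ₀| < δ := lt_of_lt_of_le hτ' (min_le_left _ _)
    have ha : a < τ' := by
      have := abs_lt.mp (lt_of_lt_of_le hτ' ((min_le_right _ _).trans (min_le_left _ _)))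
      linarith [this.1]
    have hb : τ' < b := by
      have := abs_lt.mp (lt_of_lt_of_le hτ' ((min_le_right _ _).trans (min_le_right _ _)))
      linarith [this.2]
    have hτ'mem : τ' ∈ Ioo a b := ⟨ha, hb⟩
    have hsd := hδ τ' hτ'mem hsub
    have key : ∀ ω : Sig N A, (F τ').f (shiftInv ω) (γ (shiftInv ω)) <
        ((F τ₀).f (shiftInv ω) (γ (shiftInv ω))) + ε := by
      intro ω
      have habs := abs_f_sub_le_sdist (F τ') (F τ₀) (shiftInv ω) (hγI (shiftInv ω))
      have := (abs_lt.mp (lt_of_le_of_lt habs hsd)).2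
      linarith
    refine ⟨hτ'mem, γ, hγc, hγI, fun ω => ?_, ?_, h2⟩
    · have := key ω
      have hgω : g ω₀ ≤ g ω := hω₀ (mem_univ ω)
      have hεle : ε ≤ g ω₀ := min_le_left _ _
      simp only [hg, pushGraph] at hgω hεle
      linarith
    · have := key p.1
      have hεle : ε ≤ p.2 - (F τ₀).f (shiftInv p.1) (γ (shiftInv p.1)) := min_le_right _ _
      linarith
  · rw [Metric.isOpen_iff]
    rintro τ₀ ⟨hτ₀, γ, hγc, hγI, hdrift, h1, h2⟩
    haveI : Nonempty (Sig N A) := ⟨p.1⟩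
    set g : Sig N A → ℝ := fun ω => pushGraph (F τ₀) γ ω - γ ω with hg
    have hgc : Continuous g := (pushGraph_cont (F τ₀) hγc hγI).sub hγc
    obtain ⟨ω₀, -, hω₀⟩ := isCompact_univ.exists_isMinOn univ_nonempty hgc.continuousOn
    have hgpos : 0 < g ω₀ := sub_pos.mpr (hdrift ω₀)
    set ε : ℝ := min (g ω₀) (((F τ₀).f (shiftInv p.1) (γ (shiftInv p.1))) - p.2) with hε
    have hεpos : 0 < ε := lt_min hgpos (sub_pos.mpr h2)
    obtain ⟨δ, hδpos, hδ⟩ := hcont τ₀ hτ₀ ε hεpos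
    refine ⟨min δ (min (τ₀ - a) (b - τ₀)),
      lt_min hδpos (lt_min (sub_pos.mpr hτ₀.1) (sub_pos.mpr hτ₀.2)), fun τ' hτ' => ?_⟩
    rw [Metric.mem_ball, Real.dist_eq] at hτ'
    have hsub : |τ' - τ₀| < δ := lt_of_lt_of_le hτ' (min_le_left _ _)
    have ha : a < τ' := by
      have := abs_lt.mp (lt_of_lt_of_le hτ' ((min_le_right _ _).trans (min_le_left _ _)))
      linarith [this.1]
    have hb : τ' < b := by
      have := abs_lt.mp (lt_of_lt_of_le hτ' ((min_le_right _ _).trans (min_le_right _ _)))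
      linarith [this.2]
    have hτ'mem : τ' ∈ Ioo a b := ⟨ha, hb⟩
    have hsd := hδ τ' hτ'mem hsub
    have key : ∀ ω : Sig N A, ((F τ₀).f (shiftInv ω) (γ (shiftInv ω))) - ε <
        (F τ').f (shiftInv ω) (γ (shiftInv ω)) := by
      intro ω
      have habs := abs_f_sub_le_sdist (F τ') (F τ₀) (shiftInv ω) (hγI (shiftInv ω))
      have := (abs_lt.mp (lt_of_le_of_lt habs hsd)).1
      linarith
    refine ⟨hτ'mem, γ, hγc, hγI, fun ω => ?_, h1, ?_⟩
    · have := key ω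
      have hgω : g ω₀ ≤ g ω := hω₀ (mem_univ ω)
      have hεle : ε ≤ g ω₀ := min_le_left _ _
      simp only [hg, pushGraph] at hgω hεle
      linarith
    · have := key p.1
      have hεle : ε ≤ ((F τ₀).f (shiftInv p.1) (γ (shiftInv p.1))) - p.2 := min_le_right _ _
      linarith

end SkewPaper
end
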